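/- If V is a closed R₁ invariant subspace of ℍ, then the valuation homogeneous decomposition of V has the full projection property. -/

import Mathlib

noncomputable section

/-- The valuation subspace series: `V_k = {h ∈ V : ord h ≥ k}`. -/
def valSub {H : Type*} (ord : H → ℕ∞) (V : Set H) (k : ℕ) : Set H :=
  {h | h ∈ V ∧ (k : ℕ∞) ≤ ord h}

/-- The valuation homogeneous components: `W_k`, the orthogonal complement of
`V_{k+1}` inside `V_k`. -/
def valHom {H : Type*} [NormedAddCommGroup H] [InnerProductSpace ℂ H]
    (ord : H → ℕ∞) (V : Set H) (k : ℕ) : Set H :=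
  {h | h ∈ valSub ord V k ∧ ∀ g ∈ valSub ord V (k + 1), (inner ℂ g h : ℂ) = 0}

/-- `V` is `R₁` invariant: `r • h ∈ V` for all `r` with `ord_R r ≥ 1` and `h ∈ V`. -/
def R1Invariant {R H : Type*} [SMul R H] (ordR : R → ℕ∞) (V : Set H) : Prop :=
  ∀ r : R, 1 ≤ ordR r → ∀ h ∈ V, r • h ∈ V

/-- The valuation homogeneous decomposition of `V` is `R₁` inner. -/
def R1InnerDecomp {R H : Type*} [NormedAddCommGroup H] [InnerProductSpace ℂ H] [SMul R H]
    (ordR : R → ℕ∞) (ord : H → ℕ∞) (V : Set H) : Prop :=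
  ∀ (k m : ℕ) (r : R), 1 ≤ ordR r → ∀ h ∈ valHom ord V k, ∀ g ∈ V,
    (m : ℕ∞) < ord (r • h - g) → ∀ w ∈ valHom ord V m, (inner ℂ w (r • h - g) : ℂ) = 0

/-- The valuation homogeneous decomposition of `V` has the full projection property,
where `P m` is the orthogonal projection of `ℍ` onto `H_m`. -/
def FullProjProp {R H : Type*} [NormedAddCommGroup H] [InnerProductSpace ℂ H] [SMul R H]
    (ordR : R → ℕ∞) (ord : H → ℕ∞) (P : ℕ → H → H) (V : Set H) : Prop :=
  ∀ (k m : ℕ) (r : R), 1 ≤ ordR r → ∀ h ∈ valHom ord V k, ∀ g ∈ V,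
    (m : ℕ∞) ≤ ord (r • h - g) → P m (r • h - g) ∈ P m '' valHom ord V m

/-- `P` is the orthogonal projection onto the (sub)space `S`:
`P h ∈ S` and `h - P h ⟂ S` for every `h`. -/
def IsOrthProjOnto {H : Type*} [NormedAddCommGroup H] [InnerProductSpace ℂ H]
    (S : Set H) (P : H → H) : Prop :=
  ∀ h : H, P h ∈ S ∧ ∀ y ∈ S, (inner ℂ y (h - P h) : ℂ) = 0

/-- The minimum value property: for every nonzero `h`, `ord h` is the least `k`
with `P k h ≠ 0`, where `P k` is the orthogonal projection of `ℍ` onto `H_k`. -/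
def MinValProp {H : Type*} [Zero H] (ord : H → ℕ∞) (P : ℕ → H → H) : Prop :=
  ∀ h : H, h ≠ 0 → ∃ k : ℕ, P k h ≠ 0 ∧ (∀ j < k, P j h = 0) ∧ ord h = (k : ℕ∞)

/-!
Put `u := r • h - g ∈ V_m`. Since `V` is closed and `ord` is upper semicontinuous, `V_{m+1}` is a
closed subspace, so `u` splits as `u = w + p` with `p` its orthogonal projection onto `V_{m+1}` and
`w ∈ W_m`. As `p ∈ ℍ_{m+1} ⟂ H_m`, the projections of `u` and `w` onto `H_m` coincide.
-/

open Filter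

namespace IsOrthProjOnto

variable {H : Type*} [NormedAddCommGroup H] [InnerProductSpace ℂ H] {S : Set H} {P : H → H}

theorem apply_eq_of_inner_sub_eq_zero (hP : IsOrthProjOnto S P)
    (hS : ∀ a ∈ S, ∀ b ∈ S, a - b ∈ S) {x y : H} (hxy : ∀ s ∈ S, inner ℂ s (x - y) = 0) :
    P x = P y := by
  have hd : P x - P y ∈ S := hS _ (hP x).1 _ (hP y).1
  have hdy : inner ℂ (P x - P y) (x - P y) = 0 := by
    rw [show x - P y = (x - y) + (y - P y) by abel, inner_add_right, hxy _ hd, (hP y).2 _ hd,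
      add_zero]
  have hdd : inner ℂ (P x - P y) (P x - P y) = 0 := by
    calc inner ℂ (P x - P y) (P x - P y)
        = inner ℂ (P x - P y) ((x - P y) - (x - P x)) := by congr 1; abel
      _ = 0 := by rw [inner_sub_right, hdy, (hP x).2 _ hd, sub_zero]
  exact sub_eq_zero.mp (inner_self_eq_zero.mp hdd)

end IsOrthProjOnto

theorem isClosed_setOf_le_of_limsup_le {X : Type*} [TopologicalSpace X] [SequentialSpace X]
    {f : X → ℕ∞} (hf : ∀ (u : ℕ → X) (x : X), Tendsto u atTop (nhds x) →
      limsup (fun j => f (u j)) atTop ≤ f x) (n : ℕ∞) :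
    IsClosed {x : X | n ≤ f x} :=
  IsSeqClosed.isClosed fun u x hu hlim =>
    (le_limsup_of_frequently_le (Frequently.of_forall hu) (by isBoundedDefault)).trans
      (hf u x hlim)

section Valuation

variable {H : Type*} [NormedAddCommGroup H] [InnerProductSpace ℂ H] {ord : H → ℕ∞}

theorem ord_neg (hordc : ∀ (c : ℂ) (h : H), c ≠ 0 → ord (c • h) = ord h) (x : H) :
    ord (-x) = ord x := by
  simpa using hordc (-1) x (by norm_num)

theorem min_le_ord_sub (hordc : ∀ (c : ℂ) (h : H), c ≠ 0 → ord (c • h) = ord h)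
    (hordadd : ∀ h₁ h₂ : H, min (ord h₁) (ord h₂) ≤ ord (h₁ + h₂)) (x y : H) :
    min (ord x) (ord y) ≤ ord (x - y) := by
  simpa [sub_eq_add_neg, ord_neg hordc] using hordadd x (-y)

theorem sub_mem_valHom {V : Submodule ℂ H}
    (hordc : ∀ (c : ℂ) (h : H), c ≠ 0 → ord (c • h) = ord h)
    (hordadd : ∀ h₁ h₂ : H, min (ord h₁) (ord h₂) ≤ ord (h₁ + h₂)) {m : ℕ} {a b : H}
    (ha : a ∈ valHom ord V m) (hb : b ∈ valHom ord V m) : a - b ∈ valHom ord V m := by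
  refine ⟨⟨V.sub_mem ha.1.1 hb.1.1,
    (le_min ha.1.2 hb.1.2).trans (min_le_ord_sub hordc hordadd a b)⟩, fun g hg => ?_⟩
  rw [inner_sub_right, ha.2 g hg, hb.2 g hg, sub_zero]

def valSubmodule (V : Submodule ℂ H) (hord0 : ord 0 = ⊤)
    (hordc : ∀ (c : ℂ) (h : H), c ≠ 0 → ord (c • h) = ord h)
    (hordadd : ∀ h₁ h₂ : H, min (ord h₁) (ord h₂) ≤ ord (h₁ + h₂)) (n : ℕ) : Submodule ℂ H where
  carrier := valSub ord V n
  add_mem' ha hb := ⟨V.add_mem ha.1 hb.1, (le_min ha.2 hb.2).trans (hordadd _ _)⟩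
  zero_mem' := ⟨V.zero_mem, by simp [hord0]⟩
  smul_mem' c x hx := by
    refine ⟨V.smul_mem c hx.1, ?_⟩
    rcases eq_or_ne c 0 with rfl | hc
    · simp [hord0]
    · rw [hordc c x hc]; exact hx.2

theorem exists_mem_valHom_sub_mem_valSub [CompleteSpace H] {V : Submodule ℂ H}
    (hVc : IsClosed (V : Set H)) (hord0 : ord 0 = ⊤)
    (hordc : ∀ (c : ℂ) (h : H), c ≠ 0 → ord (c • h) = ord h)
    (hordadd : ∀ h₁ h₂ : H, min (ord h₁) (ord h₂) ≤ ord (h₁ + h₂))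
    (hordusc : ∀ (u : ℕ → H) (h : H), Tendsto u atTop (nhds h) →
      limsup (fun j => ord (u j)) atTop ≤ ord h)
    {m : ℕ} {u : H} (hu : u ∈ V) (hum : (m : ℕ∞) ≤ ord u) :
    ∃ w ∈ valHom ord V m, u - w ∈ valSub ord V (m + 1) := by
  set K := valSubmodule V hord0 hordc hordadd (m + 1)
  have hKc : IsClosed (K : Set H) := hVc.inter (isClosed_setOf_le_of_limsup_le hordusc _)
  have : CompleteSpace K := hKc.completeSpace_coe
  set p := K.starProjection u
  have hp : p ∈ K := K.starProjection_apply_mem u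
  have hmp : (m : ℕ∞) ≤ ord p := le_trans (by exact_mod_cast m.le_succ) hp.2
  refine ⟨u - p, ⟨⟨V.sub_mem hu hp.1, (le_min hum hmp).trans (min_le_ord_sub hordc hordadd u p)⟩,
    fun g hg => inner_eq_zero_symm.mp (K.starProjection_inner_eq_zero u g hg)⟩, ?_⟩
  rwa [sub_sub_cancel]

theorem apply_mem_image_valHom [CompleteSpace H] {V : Submodule ℂ H}
    (hVc : IsClosed (V : Set H)) (hord0 : ord 0 = ⊤)
    (hordc : ∀ (c : ℂ) (h : H), c ≠ 0 → ord (c • h) = ord h)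
    (hordadd : ∀ h₁ h₂ : H, min (ord h₁) (ord h₂) ≤ ord (h₁ + h₂))
    (hordusc : ∀ (u : ℕ → H) (h : H), Tendsto u atTop (nhds h) →
      limsup (fun j => ord (u j)) atTop ≤ ord h)
    {P : ℕ → H → H} (hP : ∀ m : ℕ, IsOrthProjOnto (valHom ord (Set.univ : Set H) m) (P m))
    {m : ℕ} {u : H} (hu : u ∈ V) (hum : (m : ℕ∞) ≤ ord u) :
    P m u ∈ P m '' valHom ord V m := by
  obtain ⟨w, hw, huw⟩ := exists_mem_valHom_sub_mem_valSub hVc hord0 hordc hordadd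
    hordusc hu hum
  refine ⟨w, hw, ((hP m).apply_eq_of_inner_sub_eq_zero
    (fun a ha b hb => sub_mem_valHom (V := ⊤) hordc hordadd ha hb) fun s hs => ?_).symm⟩
  exact inner_eq_zero_symm.mp (hs.2 _ ⟨trivial, huw.2⟩)

end Valuation

theorem r1Invariant_implies_fullProj_general
    {R H : Type*} [CommRing R]
    [NormedAddCommGroup H] [InnerProductSpace ℂ H] [CompleteSpace H]
    [Module R H]
    (ordR : R → ℕ∞) (ord : H → ℕ∞)
    (hordtop : ∀ h : H, ord h = ⊤ ↔ h = 0)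
    (hordc : ∀ (c : ℂ) (h : H), c ≠ 0 → ord (c • h) = ord h)
    (hordadd : ∀ h₁ h₂ : H, min (ord h₁) (ord h₂) ≤ ord (h₁ + h₂))
    (hordusc : ∀ (u : ℕ → H) (h : H), Filter.Tendsto u Filter.atTop (nhds h) →
      Filter.limsup (fun j => ord (u j)) Filter.atTop ≤ ord h)
    (P : ℕ → H → H)
    (hP : ∀ m : ℕ, IsOrthProjOnto (valHom ord (Set.univ : Set H) m) (P m))
    (V : Submodule ℂ H) (hVc : IsClosed (V : Set H))
    (hinv : R1Invariant ordR (V : Set H)) :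
    FullProjProp ordR ord P (V : Set H) := by
  intro k m r hr h hh g hg hm
  exact apply_mem_image_valHom hVc ((hordtop 0).mpr rfl) hordc hordadd hordusc hP
    (V.sub_mem (hinv r hr h hh.1.1) hg) hm

/-- If `V` is a closed `R₁` invariant subspace of `ℍ`, then the valuation homogeneous
decomposition of `V` has the full projection property. -/
theorem r1Invariant_implies_fullProj
    {R H : Type*} [CommRing R] [Algebra ℂ R]
    [NormedAddCommGroup H] [InnerProductSpace ℂ H] [CompleteSpace H]
    [Module R H] [SMulCommClass ℂ R H] [IsScalarTower ℂ R H]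
    (ordR : R → ℕ∞) (ord : H → ℕ∞)
    (hordRunit : ∀ r : R, IsUnit r → ordR r = 0)
    (hordRtop : ∀ r : R, ordR r = ⊤ ↔ r = 0)
    (hordRmul : ∀ r s : R, ordR r + ordR s ≤ ordR (r * s))
    (hordRsmul : ∀ (c : ℂ) (r : R), c ≠ 0 → ordR (c • r) = ordR r)
    (hordRadd : ∀ r s : R, min (ordR r) (ordR s) ≤ ordR (r + s))
    (hordtop : ∀ h : H, ord h = ⊤ ↔ h = 0)
    (hordsmul : ∀ (r : R) (h : H), ordR r + ord h ≤ ord (r • h))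
    (hordc : ∀ (c : ℂ) (h : H), c ≠ 0 → ord (c • h) = ord h)
    (hordadd : ∀ h₁ h₂ : H, min (ord h₁) (ord h₂) ≤ ord (h₁ + h₂))
    (hordusc : ∀ (u : ℕ → H) (h : H), Filter.Tendsto u Filter.atTop (nhds h) →
      Filter.limsup (fun j => ord (u j)) Filter.atTop ≤ ord h)
    (hsmulcont : ∀ r : R, Continuous fun h : H => r • h)
    (P : ℕ → H → H)
    (hP : ∀ m : ℕ, IsOrthProjOnto (valHom ord (Set.univ : Set H) m) (P m))
    (V : Submodule ℂ H) (hVc : IsClosed (V : Set H))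
    (hinv : R1Invariant ordR (V : Set H)) :
    FullProjProp ordR ord P (V : Set H) :=
  r1Invariant_implies_fullProj_general ordR ord hordtop hordc hordadd hordusc P hP V hVc hinv
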